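/- Let p(x) = ∏_{j=1}^d (x - λ_j) be a monic polynomial with integer coefficients. If |λ_j| ≤ 1 for all j with 1 ≤ j ≤ d and no λ_j is zero, then there exists k ≥ 1 such that λ_j^k = 1 for all 1 ≤ j ≤ d. -/

import Mathlib

/-!
Every conjugate of a root `x` of `p` is again a root of `p`, hence lies in the closed unit disk,
so `x` satisfies the hypotheses of Kronecker's theorem in the number field `ℚ⟮x⟯`
(`NumberField.Embeddings.pow_eq_one_of_norm_le_one`). Finitely many roots of unity have a common
order.
-/

open Polynomial IntermediateField

theorem aeval_eq_zero_iff_of_map_eq_prod {R A ι : Type*} [CommRing R] [CommRing A] [IsDomain A]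
    [Algebra R A] [Fintype ι] {p : R[X]} {lam : ι → A}
    (hfact : p.map (algebraMap R A) = ∏ j, (X - C (lam j))) (z : A) :
    aeval z p = 0 ↔ ∃ j, lam j = z := by
  rw [aeval_def, ← eval_map, hfact, eval_prod, Finset.prod_eq_zero_iff]
  simp [sub_eq_zero, eq_comm]

theorem isOfFinOrder_of_aeval_eq_zero_of_roots_norm_le_one {p : ℤ[X]} (hp : p.Monic)
    (hroots : ∀ z : ℂ, aeval z p = 0 → ‖z‖ ≤ 1) {x : ℂ} (hx0 : x ≠ 0) (hx : aeval x p = 0) :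
    IsOfFinOrder x := by
  have : FiniteDimensional ℚ ℚ⟮x⟯ :=
    adjoin.finiteDimensional (IsIntegral.tower_top (A := ℚ) ⟨p, hp, hx⟩)
  have : NumberField ℚ⟮x⟯ := ⟨⟩
  set g := AdjoinSimple.gen ℚ x
  have hgx : algebraMap ℚ⟮x⟯ ℂ g = x := AdjoinSimple.algebraMap_gen ℚ x
  have hg : aeval g p = 0 := by
    apply (algebraMap ℚ⟮x⟯ ℂ).injective
    rw [map_zero, ← aeval_algebraMap_apply, hgx, hx]
  have hg0 : g ≠ 0 := fun h ↦ hx0 (by rw [← hgx, h, map_zero])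
  have hconj (φ : ℚ⟮x⟯ →+* ℂ) : ‖φ g‖ ≤ 1 :=
    hroots _ (by rw [← φ.toIntAlgHom_apply, aeval_algHom_apply, hg, map_zero])
  obtain ⟨n, hn, hgn⟩ :=
    NumberField.Embeddings.pow_eq_one_of_norm_le_one ℚ⟮x⟯ ℂ hg0 ⟨p, hp, hg⟩ hconj
  exact isOfFinOrder_iff_pow_eq_one.2 ⟨n, hn, by rw [← hgx, ← map_pow, hgn, map_one]⟩

/-- Kronecker's Lemma: if a monic integer polynomial has all its complex roots
of modulus at most 1 and none equal to zero, then all roots are roots of unity. -/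
theorem kronecker_lemma (d : ℕ) (p : Polynomial ℤ) (lam : Fin d → ℂ)
    (hmonic : p.Monic)
    (hfact : p.map (Int.castRingHom ℂ) = ∏ j, (X - C (lam j)))
    (hle : ∀ j, ‖lam j‖ ≤ 1)
    (hne : ∀ j, lam j ≠ 0) :
    ∃ k : ℕ, 1 ≤ k ∧ ∀ j, lam j ^ k = 1 := by
  have hroot := aeval_eq_zero_iff_of_map_eq_prod (R := ℤ) (A := ℂ) hfact
  have hroots (z : ℂ) (hz : aeval z p = 0) : ‖z‖ ≤ 1 := by
    obtain ⟨j, rfl⟩ := (hroot z).1 hz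
    exact hle j
  have hord : IsOfFinOrder lam := IsOfFinOrder.pi fun j ↦
    isOfFinOrder_of_aeval_eq_zero_of_roots_norm_le_one hmonic hroots (hne j) ((hroot _).2 ⟨j, rfl⟩)
  obtain ⟨k, hk, hlamk⟩ := isOfFinOrder_iff_pow_eq_one.1 hord
  exact ⟨k, hk, fun j ↦ congrFun hlamk j⟩
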